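/- arXiv:1401.7964 — 2 statements merged into one kernel-verified Lean document; each statement's English description precedes it below -/
import Mathlib

section
/- If a metrizable space X of the first category contains a subspace homeomorphic to the Cantor set 2^ω, then X is not densely homogeneous; that is, either X has no dense σ-discrete subset, or there exist two σ-discrete dense subsets A and B of X such that no homeomorphism of X onto itself maps A onto B. -/
/-!
Suppose `X` has a dense σ-discrete set `A₀`, and write `X = ⋃ Gₙ` with `Gₙ` closed, nowhere
dense and increasing. Moving each point of the `m`-th discrete piece of `A₀` by less than
`1/(k+1)` (and less than a third of its separation radius) off `G_{m+k}` gives a dense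
σ-discrete set `B` every trace `B ∩ Gₙ` of which is closed and discrete. On the other hand
`A = A₀ ∪ D`, with `D` a countable dense subset of the Cantor set `K ⊆ X`, is dense and
σ-discrete as well. A homeomorphism `h` with `h(A) = B` would make every `D ∩ h⁻¹(Gₙ)` closed
and discrete; but by the Baire category theorem one of the closed sets `K ∩ h⁻¹(Gₙ)` has
nonempty interior in `K`, and since `K` has no isolated points the dense set `D` accumulates
there.
-/

open Set Topology

/-- A subset `A` of a topological space `X` is σ-discrete (in `X`) if it is a countable
union of sets `A n` such that every point of `X` has a neighborhood containing at most
one point of `A n`. -/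
def SigmaDiscrete {X : Type*} [TopologicalSpace X] (A : Set X) : Prop :=
  ∃ f : ℕ → Set X, A = ⋃ n, f n ∧
    ∀ n, ∀ x : X, ∃ U ∈ 𝓝 x, (U ∩ f n).Subsingleton

open Filter Metric

section LocallySubsingleton

variable {X Y : Type*} [TopologicalSpace X]

/-- The condition on the pieces of a σ-discrete set; in a T₁ space it says that `S` is closed
and discrete. -/
def LocallySubsingleton (S : Set X) : Prop :=
  ∀ x : X, ∃ U ∈ 𝓝 x, (U ∩ S).Subsingleton

theorem locallySubsingleton_empty : LocallySubsingleton (∅ : Set X) :=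
  fun _ => ⟨univ, univ_mem, by simp⟩

theorem locallySubsingleton_singleton (a : X) : LocallySubsingleton {a} :=
  fun _ => ⟨univ, univ_mem, subsingleton_singleton.anti inter_subset_right⟩

theorem LocallySubsingleton.mono {S T : Set X} (hS : LocallySubsingleton S) (hTS : T ⊆ S) :
    LocallySubsingleton T := fun x => by
  obtain ⟨U, hU, hUS⟩ := hS x
  exact ⟨U, hU, hUS.anti (inter_subset_inter_right U hTS)⟩

theorem LocallySubsingleton.preimage [TopologicalSpace Y] {S : Set X}
    (hS : LocallySubsingleton S) {f : Y → X} (hf : Continuous f) (hinj : f.Injective) :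
    LocallySubsingleton (f ⁻¹' S) := fun y => by
  obtain ⟨U, hU, hUS⟩ := hS (f y)
  exact ⟨f ⁻¹' U, hf.continuousAt hU, hUS.preimage hinj⟩

theorem LocallySubsingleton.union [T1Space X] {S S' : Set X} (hS : LocallySubsingleton S)
    (hS' : LocallySubsingleton S') : LocallySubsingleton (S ∪ S') := by
  intro x
  obtain ⟨U, hU, hUS⟩ := hS x
  obtain ⟨U', hU', hUS'⟩ := hS' x
  set F := (U ∩ S ∪ U' ∩ S') \ {x}
  have hF : Fᶜ ∈ 𝓝 x :=
    ((hUS.finite.union hUS'.finite).sdiff.isClosed).compl_mem_nhds fun h => h.2 rfl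
  refine ⟨U ∩ U' ∩ Fᶜ, inter_mem (inter_mem hU hU') hF, (subsingleton_singleton (a := x)).anti ?_⟩
  rintro y ⟨⟨⟨hyU, hyU'⟩, hyF⟩, hyS⟩
  by_contra hyx
  exact hyF ⟨hyS.imp (⟨hyU, ·⟩) (⟨hyU', ·⟩), hyx⟩

theorem LocallySubsingleton.biUnion_finset [T1Space X] {ι : Type*} {t : Finset ι}
    {S : ι → Set X} (h : ∀ i ∈ t, LocallySubsingleton (S i)) :
    LocallySubsingleton (⋃ i ∈ t, S i) := by
  classical
  induction t using Finset.induction_on with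
  | empty => simpa using locallySubsingleton_empty
  | insert i t _ ih =>
    rw [Finset.set_biUnion_insert]
    exact (h i (t.mem_insert_self i)).union (ih fun j hj => h j (Finset.mem_insert_of_mem hj))

theorem Metric.locallySubsingleton_iff [PseudoMetricSpace Y] {S : Set Y} :
    LocallySubsingleton S ↔ ∀ x, ∃ ε > 0, (ball x ε ∩ S).Subsingleton := by
  refine forall_congr' fun x => ⟨fun ⟨U, hU, hUS⟩ => ?_, fun ⟨ε, hε, hS⟩ => ⟨_, ball_mem_nhds x hε, hS⟩⟩
  obtain ⟨ε, hε, hεU⟩ := Metric.mem_nhds_iff.1 hU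
  exact ⟨ε, hε, hUS.anti (inter_subset_inter_left S hεU)⟩

theorem LocallySubsingleton.image_of_dist_lt [PseudoMetricSpace Y] {S : Set Y} {r : Y → ℝ}
    (hr : ∀ x, 0 < r x) (hS : ∀ x, (ball x (r x) ∩ S).Subsingleton) {g : Y → Y}
    (hg : ∀ a ∈ S, dist (g a) a < r a / 3) : LocallySubsingleton (g '' S) := by
  refine Metric.locallySubsingleton_iff.2 fun x => ⟨r x / 7, by linarith [hr x], ?_⟩
  rintro _ ⟨hp, a, ha, rfl⟩ _ ⟨hq, a', ha', rfl⟩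
  by_contra hne
  replace hne : a ≠ a' := fun h => hne (h ▸ rfl)
  have hsep : ∀ {c c'}, c ∈ S → c' ∈ S → c ≠ c' → r c ≤ dist c c' := fun hc hc' hcc' =>
    not_lt.1 fun hlt => hcc' (hS _ ⟨mem_ball_self (hr _), hc⟩ ⟨mem_ball'.2 hlt, hc'⟩)
  have h₁ := hsep ha ha' hne
  have h₂ := hsep ha' ha hne.symm
  have hp' := mem_ball.1 hp
  have hq' := mem_ball.1 hq
  have hga := hg a ha
  have hga' := hg a' ha'
  -- `dist a a'` dominates `r a` and `r a'`, hence absorbs both displacements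
  have hd : dist a a' < 6 * (r x / 7) := by
    linarith [dist_triangle4 a (g a) (g a') a', dist_triangle (g a) x (g a'),
      dist_comm a (g a), dist_comm x (g a'), dist_comm a a']
  refine hne (hS x ⟨mem_ball.2 ?_, ha⟩ ⟨mem_ball.2 ?_, ha'⟩)
  · linarith [dist_triangle a (g a) x, dist_comm a (g a), hr x]
  · linarith [dist_triangle a' (g a') x, dist_comm a' (g a'), dist_comm a a', hr x]

end LocallySubsingleton

section SigmaDiscrete

variable {X : Type*} [TopologicalSpace X]

theorem sigmaDiscrete_iUnion {ι : Type*} [Countable ι] {S : ι → Set X}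
    (h : ∀ i, LocallySubsingleton (S i)) : SigmaDiscrete (⋃ i, S i) := by
  cases isEmpty_or_nonempty ι with
  | inl _ => exact ⟨fun _ => ∅, by simp, fun _ => locallySubsingleton_empty⟩
  | inr _ =>
    obtain ⟨g, hg⟩ := exists_surjective_nat ι
    exact ⟨fun n => S (g n), (hg.iUnion_comp S).symm, fun n => h (g n)⟩

theorem SigmaDiscrete.union {A A' : Set X} (hA : SigmaDiscrete A) (hA' : SigmaDiscrete A') :
    SigmaDiscrete (A ∪ A') := by
  obtain ⟨S, rfl, hS⟩ := hA
  obtain ⟨S', rfl, hS'⟩ := hA'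
  rw [← iUnion_sumElim]
  exact sigmaDiscrete_iUnion (Sum.rec hS hS')

theorem Set.Countable.sigmaDiscrete {D : Set X} (hD : D.Countable) : SigmaDiscrete D := by
  have := hD.to_subtype
  simpa only [iUnion_of_singleton_coe] using
    sigmaDiscrete_iUnion fun x : D => locallySubsingleton_singleton x.1

end SigmaDiscrete

theorem exists_monotone_isClosed_cover_of_isNowhereDense {X : Type*} [TopologicalSpace X]
    {f : ℕ → Set X} (hf : ∀ n, IsNowhereDense (f n)) (hcov : ⋃ n, f n = univ) :
    ∃ G : ℕ → Set X, Monotone G ∧ (∀ n, IsClosed (G n)) ∧ (∀ n, interior (G n) = ∅) ∧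
      ⋃ n, G n = univ := by
  have hGc : ∀ n, IsClosed (accumulate (fun n => closure (f n)) n) := fun n => by
    rw [accumulate_def]
    exact (finite_le_nat n).isClosed_biUnion fun _ _ => isClosed_closure
  refine ⟨_, monotone_accumulate, hGc, fun n => ?_, ?_⟩
  · induction n with
    | zero => exact (accumulate_zero_nat _).symm ▸ hf 0
    | succ n ih =>
      rw [accumulate_succ, interior_union_isClosed_of_interior_empty (hGc n) (hf (n + 1)), ih]
  · rw [iUnion_accumulate]
    exact eq_univ_of_subset (iUnion_mono fun n => subset_closure) hcov

theorem exists_dense_sigmaDiscrete_inter_locallySubsingleton {X : Type*} [MetricSpace X]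
    {G : ℕ → Set X} (hGm : Monotone G) (hGd : ∀ n, Dense (G n)ᶜ) {A : Set X} (hAd : Dense A)
    (hA : SigmaDiscrete A) :
    ∃ B : Set X, Dense B ∧ SigmaDiscrete B ∧ ∀ n, LocallySubsingleton (B ∩ G n) := by
  obtain ⟨S, rfl, hS⟩ := hA
  choose r hr hrS using fun m => Metric.locallySubsingleton_iff.1 (hS m)
  have hmove : ∀ m k (a : X), ∃ b ∉ G (m + k), dist b a < min (r m a / 3) (1 / (k + 1)) :=
    fun m k a => by
      have hε : 0 < min (r m a / 3) (1 / (k + 1 : ℝ)) := lt_min (by linarith [hr m a]) (by positivity)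
      obtain ⟨b, hba, hbG⟩ := (hGd (m + k)).inter_open_nonempty _ isOpen_ball ⟨a, mem_ball_self hε⟩
      exact ⟨b, hbG, mem_ball.1 hba⟩
  choose b hbG hba using hmove
  have hpiece : ∀ m k, LocallySubsingleton (b m k '' S m) := fun m k =>
    LocallySubsingleton.image_of_dist_lt (hr m) (hrS m) fun a _ =>
      (hba m k a).trans_le (min_le_left _ _)
  refine ⟨⋃ p : ℕ × ℕ, b p.1 p.2 '' S p.1, ?_, sigmaDiscrete_iUnion fun p => hpiece p.1 p.2,
    fun n => ?_⟩
  · refine Metric.dense_iff.2 fun x ε hε => ?_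
    obtain ⟨a, hax, ha⟩ := Metric.dense_iff.1 hAd x (ε / 2) (half_pos hε)
    obtain ⟨m, ha⟩ := mem_iUnion.1 ha
    obtain ⟨k, hk⟩ := exists_nat_one_div_lt (half_pos hε)
    refine ⟨b m k a, mem_ball.2 ?_, mem_iUnion.2 ⟨(m, k), a, ha, rfl⟩⟩
    linarith [dist_triangle (b m k a) a x, (hba m k a).trans_le (min_le_right _ _), mem_ball.1 hax]
  · refine (LocallySubsingleton.biUnion_finset (t := Finset.range n ×ˢ Finset.range n)
      fun p _ => hpiece p.1 p.2).mono ?_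
    rintro _ ⟨hy, hyG⟩
    obtain ⟨⟨m, k⟩, a, ha, rfl⟩ := mem_iUnion.1 hy
    have hmk : m + k < n := not_le.1 fun hn => hbG m k a (hGm hn hyG)
    exact mem_iUnion₂.2 ⟨(m, k), Finset.mem_product.2
      ⟨Finset.mem_range.2 (by omega), Finset.mem_range.2 (by omega)⟩, a, ha, rfl⟩

instance Pi.nhdsNE_neBot {ι : Type*} {π : ι → Type*} [Infinite ι] [∀ i, TopologicalSpace (π i)]
    [∀ i, Nontrivial (π i)] (x : ∀ i, π i) : NeBot (𝓝[≠] x) := by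
  classical
  choose y hy using fun i => exists_ne (x i)
  have hlim : Tendsto (fun i => Function.update x i (y i)) cofinite (𝓝[≠] x) := by
    refine tendsto_nhdsWithin_iff.2 ⟨tendsto_pi_nhds.2 fun j => ?_, .of_forall fun i h => ?_⟩
    · refine tendsto_const_nhds.congr' ?_
      filter_upwards [eventually_cofinite_ne j] with i hi
      exact (Function.update_of_ne (Ne.symm hi) _ _).symm
    · exact hy i (by simpa using congr_fun h i)
  exact hlim.neBot

section Baire

variable {Y : Type*} [TopologicalSpace Y] [T1Space Y] [∀ y : Y, NeBot (𝓝[≠] y)]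

theorem Dense.not_locallySubsingleton_inter_of_isOpen {T V : Set Y} (hT : Dense T)
    (hV : IsOpen V) (hne : V.Nonempty) : ¬ LocallySubsingleton (T ∩ V) := by
  intro h
  obtain ⟨t, htV, htT⟩ := hT.inter_open_nonempty V hV hne
  obtain ⟨U, hU, hUS⟩ := h t
  have htUV : t ∈ interior (U ∩ V) := mem_interior_iff_mem_nhds.2 (inter_mem hU (hV.mem_nhds htV))
  obtain ⟨s, hsUV, hsT, hst⟩ :=
    (hT.sdiff_singleton t).inter_open_nonempty _ isOpen_interior ⟨t, htUV⟩
  have hsUV := interior_subset hsUV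
  exact hst (hUS ⟨hsUV.1, hsT, hsUV.2⟩ ⟨mem_of_mem_nhds hU, htT, htV⟩)

theorem Dense.exists_not_locallySubsingleton_inter [BaireSpace Y] [Nonempty Y] {T : Set Y}
    (hT : Dense T) {E : ℕ → Set Y} (hE : ∀ n, IsClosed (E n)) (hcov : ⋃ n, E n = univ) :
    ∃ n, ¬ LocallySubsingleton (T ∩ E n) := by
  obtain ⟨n, hn⟩ := nonempty_interior_of_iUnion_of_closed hE hcov
  exact ⟨n, fun h => hT.not_locallySubsingleton_inter_of_isOpen isOpen_interior hn
    (h.mono (inter_subset_inter_right T interior_subset))⟩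

end Baire

/-- If a metrizable space `X` of the first category contains a subspace homeomorphic to
the Cantor set `2^ω`, then `X` is not densely homogeneous: either `X` has no dense
σ-discrete subset, or there are two σ-discrete dense subsets `A`, `B` of `X` such that
no self-homeomorphism of `X` maps `A` onto `B`. -/
theorem stmt_3 {X : Type*} [TopologicalSpace X] [TopologicalSpace.MetrizableSpace X]
    (hmeager : ∃ f : ℕ → Set X, (∀ n, IsNowhereDense (f n)) ∧ (⋃ n, f n) = Set.univ)
    (hK : ∃ K : Set X, Nonempty (↥K ≃ₜ (ℕ → Bool))) :
    (¬ ∃ A : Set X, Dense A ∧ SigmaDiscrete A) ∨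
    (∃ A B : Set X, Dense A ∧ SigmaDiscrete A ∧ Dense B ∧ SigmaDiscrete B ∧
      ∀ h : X ≃ₜ X, h '' A ≠ B) := by
  refine or_iff_not_imp_left.2 fun hA₀ => ?_
  obtain ⟨A₀, hA₀d, hA₀⟩ := not_not.1 hA₀
  let := TopologicalSpace.metrizableSpaceMetric X
  obtain ⟨f, hf, hcov⟩ := hmeager
  obtain ⟨G, hGm, hGc, hGi, hGcov⟩ := exists_monotone_isClosed_cover_of_isNowhereDense hf hcov
  obtain ⟨B, hBd, hB, hBG⟩ := exists_dense_sigmaDiscrete_inter_locallySubsingleton hGm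
    (fun n => interior_eq_empty_iff_dense_compl.1 (hGi n)) hA₀d hA₀
  obtain ⟨K, ⟨e⟩⟩ := hK
  obtain ⟨φ, hφ⟩ : ∃ φ : (ℕ → Bool) → X, IsEmbedding φ :=
    ⟨_, IsEmbedding.subtypeVal.comp e.symm.isEmbedding⟩
  obtain ⟨T, hTc, hTd⟩ := TopologicalSpace.exists_countable_dense (ℕ → Bool)
  refine ⟨A₀ ∪ φ '' T, B, hA₀d.mono subset_union_left, hA₀.union (hTc.image φ).sigmaDiscrete,
    hBd, hB, fun h hAB => ?_⟩
  obtain ⟨n, hn⟩ := hTd.exists_not_locallySubsingleton_inter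
    (fun n => ((hGc n).preimage h.continuous).preimage hφ.continuous)
    (by simp only [← preimage_iUnion, hGcov, preimage_univ])
  refine hn ((((hBG n).preimage h.continuous h.injective).preimage hφ.continuous
    hφ.injective).mono ?_)
  rintro t ⟨htT, htG⟩
  exact ⟨hAB ▸ mem_image_of_mem h (Or.inr (mem_image_of_mem φ htT)), htG⟩
end

section
/- Every countable dense homogeneous separable metrizable space of the first category is a λ-set; that is, if X is a separable metrizable space that is a countable union of nowhere dense subsets and for any two countable dense subsets A, B of X there is a self-homeomorphism of X mapping A onto B, then every countable subset of X is a Gδ-set in X. -/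
/-!
A first-category separable metrizable space `X` contains a countable dense `Gδ` set `D`: choose
the `k`-th point of `D` in the `k`-th basic open set, outside the first `k` closed nowhere dense
sets of a cover of `X`. Then `D` meets each of these closed sets in a finite set, which makes it
a `Gδ`. For countable `A`, countable dense homogeneity gives a homeomorphism of `X` carrying `D`
onto `A ∪ D`, so `A ∪ D` is a `Gδ` too, and `A` is obtained from it by removing the countable set
`D \ A`.
-/

open Set TopologicalSpace

section

variable {X : Type*} [TopologicalSpace X]

lemma IsNowhereDense.union {s t : Set X} (hs : IsNowhereDense s) (ht : IsNowhereDense t) :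
    IsNowhereDense (s ∪ t) := by
  rw [IsNowhereDense, closure_union, interior_union_isClosed_of_interior_empty isClosed_closure ht]
  exact hs

lemma Set.Finite.isNowhereDense_biUnion {ι : Type*} {I : Set ι} (hI : I.Finite) {f : ι → Set X}
    (hf : ∀ i ∈ I, IsNowhereDense (f i)) : IsNowhereDense (⋃ i ∈ I, f i) := by
  induction I, hI using Set.Finite.induction_on with
  | empty => simp
  | insert _ _ ih =>
    rw [biUnion_insert]
    exact (hf _ (mem_insert _ _)).union (ih fun i hi => hf i (mem_insert_of_mem _ hi))

lemma isGδ_of_finite_inter_of_iUnion_eq_univ [FirstCountableTopology X] [T1Space X] {F : ℕ → Set X}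
    (hF : ∀ n, IsClosed (F n)) (hcover : ⋃ n, F n = univ) {D : Set X}
    (hD : ∀ n, (D ∩ F n).Finite) : IsGδ D := by
  have hD_eq : D = ⋂ n, (F n)ᶜ ∪ (D ∩ F n) := by
    ext x
    obtain ⟨n, hxn⟩ : ∃ n, x ∈ F n := mem_iUnion.1 (hcover.symm ▸ mem_univ x)
    simp only [mem_iInter, mem_union, mem_compl_iff, mem_inter_iff]
    exact ⟨fun hx m => (em (x ∈ F m)).symm.imp id (⟨hx, ·⟩),
      fun h => ((h n).resolve_left (not_not.2 hxn)).1⟩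
  rw [hD_eq]
  exact .iInter fun n => (hF n).isOpen_compl.isGδ.union (hD n).isGδ

lemma exists_seq_denseRange_notMem_of_isNowhereDense [SecondCountableTopology X] [Nonempty X]
    {f : ℕ → Set X} (hf : ∀ n, IsNowhereDense (f n)) :
    ∃ g : ℕ → X, DenseRange g ∧ ∀ k, ∀ i ≤ k, g k ∉ f i := by
  have hb := isBasis_countableBasis X
  have hb_ne : (countableBasis X).Nonempty :=
    let ⟨s, hs, _⟩ := hb.exists_subset_of_mem_open (mem_univ (Classical.arbitrary X)) isOpen_univ
    ⟨s, hs⟩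
  obtain ⟨e, he⟩ := (countable_countableBasis X).exists_eq_range hb_ne
  have hpick : ∀ k, ∃ x ∈ e k, x ∉ ⋃ i ≤ k, f i := by
    intro k
    have hek : e k ∈ countableBasis X := he ▸ mem_range_self k
    by_contra! hsub
    have hnd := (finite_Iic k).isNowhereDense_biUnion fun i _ => hf i
    exact (nonempty_of_mem_countableBasis hek).ne_empty <| eq_empty_of_subset_empty <|
      hnd ▸ interior_maximal (fun x hx => subset_closure (hsub x hx)) (hb.isOpen hek)
  choose g hge hgf using hpick
  refine ⟨g, hb.dense_iff.2 fun o ho hne => ?_, fun k i hi hgi => hgf k (mem_biUnion hi hgi)⟩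
  obtain ⟨k, rfl⟩ := he ▸ ho
  exact ⟨g k, hge k, mem_range_self k⟩

lemma exists_countable_dense_isGδ_of_iUnion_isNowhereDense [SecondCountableTopology X]
    [T1Space X] {f : ℕ → Set X} (hf : ∀ n, IsNowhereDense (f n)) (hcover : ⋃ n, f n = univ) :
    ∃ D : Set X, D.Countable ∧ Dense D ∧ IsGδ D := by
  cases isEmpty_or_nonempty X
  · exact ⟨∅, countable_empty, isEmptyElim, .empty⟩
  obtain ⟨g, hg_dense, hg_notMem⟩ :=
    exists_seq_denseRange_notMem_of_isNowhereDense fun n => (hf n).closure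
  refine ⟨range g, countable_range g, hg_dense, ?_⟩
  refine isGδ_of_finite_inter_of_iUnion_eq_univ (fun n => isClosed_closure)
    (eq_univ_of_univ_subset <| hcover ▸ iUnion_mono fun n => subset_closure) fun n => ?_
  refine ((finite_Iio n).image g).subset ?_
  rintro _ ⟨⟨k, rfl⟩, hk⟩
  exact ⟨k, lt_of_not_ge fun hnk => hg_notMem k n hnk hk, rfl⟩

def IsCountableDenseHomogeneous (X : Type*) [TopologicalSpace X] : Prop :=
  ∀ A B : Set X, A.Countable → Dense A → B.Countable → Dense B → ∃ h : X ≃ₜ X, h '' A = B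

lemma IsCountableDenseHomogeneous.isGδ_of_countable [T1Space X]
    (hX : IsCountableDenseHomogeneous X) {D : Set X} (hDc : D.Countable) (hDd : Dense D)
    (hDG : IsGδ D) {A : Set X} (hA : A.Countable) : IsGδ A := by
  obtain ⟨h, hh⟩ := hX D (A ∪ D) hDc hDd (hA.union hDc) (hDd.mono subset_union_right)
  have hAD : IsGδ (A ∪ D) := by
    rw [← hh, ← h.preimage_symm]
    exact hDG.preimage h.symm.continuous
  have hA_eq : A = (A ∪ D) \ (D \ A) := by
    ext x
    by_cases hx : x ∈ A <;> simp [hx]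
  rw [hA_eq]
  exact hAD.inter (hDc.mono sdiff_subset).isGδ_compl

end

/-- Every countable dense homogeneous separable metrizable space of the first category
is a `λ`-set: every countable subset of `X` is a `Gδ`-set in `X`. -/
theorem stmt_14 {X : Type*} [TopologicalSpace X] [TopologicalSpace.MetrizableSpace X]
    [TopologicalSpace.SeparableSpace X]
    (hmeager : ∃ f : ℕ → Set X, (∀ n, IsNowhereDense (f n)) ∧ (⋃ n, f n) = Set.univ)
    (hCDH : ∀ A B : Set X, A.Countable → Dense A → B.Countable → Dense B →
      ∃ h : X ≃ₜ X, h '' A = B)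
    (A : Set X) (hA : A.Countable) : IsGδ A := by
  let := pseudoMetrizableSpaceUniformity X
  have := pseudoMetrizableSpaceUniformity_countably_generated X
  have := UniformSpace.secondCountable_of_separable X
  obtain ⟨f, hf, hcover⟩ := hmeager
  obtain ⟨D, hDc, hDd, hDG⟩ := exists_countable_dense_isGδ_of_iUnion_isNowhereDense hf hcover
  exact IsCountableDenseHomogeneous.isGδ_of_countable hCDH hDc hDd hDG hA
end
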